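/- arXiv:2008.10028 — 5 statements merged into one kernel-verified Lean document; each statement's English description precedes it below -/
import Mathlib

section
/- Consider the scalar ODE ẋ = −ρx − κ₁|x|^{γ₁} sgn(x) − κ₂|x|^{γ₂} sgn(x) with ρ, κ₁, κ₂ > 0, 0 < γ₁ < 1 < γ₂, and initial value x(0) = x₀. Then for every x₀, the solution reaches 0 in finite time T(x₀), and T(x₀) ≤ (1/(ρ(γ₂−1))) ln(1 + ρ/κ₂) + (1/(ρ(1−γ₁))) ln(1 + ρ/κ₁); in particular the settling time is bounded uniformly in x₀ (fixed-time stability). -/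
/-! For a positive solution `y`, the substitution `u = y ^ (1 - γ)` turns the term `κ y ^ γ`
into a constant: `u' = (γ - 1) (ρ u + κ₁ y ^ (γ₁ - γ) + κ₂ y ^ (γ₂ - γ))`. With `γ = γ₂`, dropping
the `κ₁`-term, Grönwall gives `u + κ₂/ρ ≥ e^{ρ(γ₂-1)t} (u(0) + κ₂/ρ)`, so after
`T₂ = log(1 + ρ/κ₂) / (ρ(γ₂-1))` we have `u > 1`, i.e. `y < 1`, whatever `y(0)` was. With `γ = γ₁`,
dropping the `κ₂`-term, `u + κ₁/ρ` decays like `e^{-ρ(1-γ₁)t}`, and starting from `y ≤ 1` it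
reaches `κ₁/ρ`, i.e. `u = 0`, within `T₁ = log(1 + ρ/κ₁) / (ρ(1-γ₁))`. A solution without zeros
keeps its sign, and the equation is odd, so negative solutions reduce to positive ones. -/

/-- Signed power `|y|^γ sgn(y)` appearing in the attracting laws. -/
noncomputable def spow (y γ : ℝ) : ℝ := |y| ^ γ * Real.sign y

open Set Real

lemma spow_of_pos {y : ℝ} (hy : 0 < y) (γ : ℝ) : spow y γ = y ^ γ := by
  rw [spow, Real.sign_of_pos hy, abs_of_pos hy, mul_one]

lemma spow_neg (y γ : ℝ) : spow (-y) γ = -spow y γ := by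
  rw [spow, spow, abs_neg, Real.sign_neg, mul_neg]

lemma IsPreconnected.pos_of_forall_ne_zero {f : ℝ → ℝ} {s : Set ℝ} (hs : IsPreconnected s)
    (hf : ContinuousOn f s) {a : ℝ} (ha : a ∈ s) (hfa : 0 < f a) (hne : ∀ t ∈ s, f t ≠ 0) :
    ∀ t ∈ s, 0 < f t := by
  intro t ht
  by_contra! hle
  obtain ⟨u, hu, hfu⟩ := hs.intermediate_value ht ha hf ⟨hle, hfa.le⟩
  exact hne u hu hfu

lemma le_mul_exp_of_hasDerivAt_le_mul {f f' : ℝ → ℝ} {k a b : ℝ} (hab : a ≤ b)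
    (hf : ∀ t ∈ Icc a b, HasDerivAt f (f' t) t) (hle : ∀ t ∈ Icc a b, f' t ≤ k * f t) :
    f b ≤ f a * exp (k * (b - a)) := by
  have := le_gronwallBound_of_liminf_deriv_right_le (f' := f') (ε := 0)
    (fun t ht => (hf t ht).continuousAt.continuousWithinAt)
    (fun t ht _ hr => (hf t (Ico_subset_Icc_self ht)).hasDerivWithinAt.liminf_right_slope_le hr)
    le_rfl (fun t ht => by simpa using hle t (Ico_subset_Icc_self ht)) b ⟨hab, le_rfl⟩
  rwa [gronwallBound_ε0] at this

lemma nonneg_of_mul_eq_log_one_add {c r T : ℝ} (hc : 0 < c) (hr : 0 ≤ r)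
    (hT : c * T = log (1 + r)) : 0 ≤ T :=
  nonneg_of_mul_nonneg_right (hT ▸ log_nonneg (by linarith)) hc

section PositiveSolution

variable {ρ κ₁ κ₂ γ₁ γ₂ : ℝ} {y : ℝ → ℝ} {a b : ℝ}

lemma hasDerivAt_rpow_one_sub_of_ode {t : ℝ} (hy : 0 < y t)
    (hode : HasDerivAt y (-(ρ * y t + κ₁ * y t ^ γ₁ + κ₂ * y t ^ γ₂)) t) (γ : ℝ) :
    HasDerivAt (fun s => y s ^ (1 - γ))
      ((γ - 1) * (ρ * y t ^ (1 - γ) + κ₁ * y t ^ (γ₁ - γ) + κ₂ * y t ^ (γ₂ - γ))) t := by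
  convert hode.rpow_const (p := 1 - γ) (Or.inl hy.ne') using 1
  simp only [rpow_sub hy, rpow_one]
  field_simp
  ring

lemma rpow_add_mul_exp_le_of_ode (hρ : 0 < ρ) (hκ₁ : 0 ≤ κ₁) (hγ₂ : 1 < γ₂) (hab : a ≤ b)
    (hode : ∀ t ∈ Icc a b, HasDerivAt y (-(ρ * y t + κ₁ * y t ^ γ₁ + κ₂ * y t ^ γ₂)) t)
    (hpos : ∀ t ∈ Icc a b, 0 < y t) :
    (y a ^ (1 - γ₂) + κ₂ / ρ) * exp (ρ * (γ₂ - 1) * (b - a)) ≤ y b ^ (1 - γ₂) + κ₂ / ρ := by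
  have key := le_mul_exp_of_hasDerivAt_le_mul (f := fun t => -(y t ^ (1 - γ₂) + κ₂ / ρ))
    (k := ρ * (γ₂ - 1)) hab
    (fun t ht => ((hasDerivAt_rpow_one_sub_of_ode (hpos t ht) (hode t ht) γ₂).add_const _).neg)
    (fun t ht => by
      have hκ₁_term : 0 ≤ (γ₂ - 1) * κ₁ * y t ^ (γ₁ - γ₂) := by
        have := rpow_pos_of_pos (hpos t ht) (γ₁ - γ₂)
        have : 0 ≤ γ₂ - 1 := by linarith
        positivity
      rw [sub_self, rpow_zero]
      field_simp
      linarith)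
  simp only [neg_mul] at key
  linarith

lemma rpow_add_le_mul_exp_of_ode (hρ : 0 < ρ) (hκ₂ : 0 ≤ κ₂) (hγ₁ : γ₁ < 1) (hab : a ≤ b)
    (hode : ∀ t ∈ Icc a b, HasDerivAt y (-(ρ * y t + κ₁ * y t ^ γ₁ + κ₂ * y t ^ γ₂)) t)
    (hpos : ∀ t ∈ Icc a b, 0 < y t) :
    y b ^ (1 - γ₁) + κ₁ / ρ ≤ (y a ^ (1 - γ₁) + κ₁ / ρ) * exp (-(ρ * (1 - γ₁)) * (b - a)) :=
  le_mul_exp_of_hasDerivAt_le_mul hab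
    (fun t ht => (hasDerivAt_rpow_one_sub_of_ode (hpos t ht) (hode t ht) γ₁).add_const _)
    (fun t ht => by
      have hκ₂_term : 0 ≤ (1 - γ₁) * κ₂ * y t ^ (γ₂ - γ₁) := by
        have := rpow_pos_of_pos (hpos t ht) (γ₂ - γ₁)
        have : 0 ≤ 1 - γ₁ := by linarith
        positivity
      rw [sub_self, rpow_zero]
      field_simp
      linarith)

lemma lt_one_of_ode (hρ : 0 < ρ) (hκ₁ : 0 ≤ κ₁) (hκ₂ : 0 < κ₂) (hγ₂ : 1 < γ₂)
    (hT : ρ * (γ₂ - 1) * (b - a) = log (1 + ρ / κ₂))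
    (hode : ∀ t ∈ Icc a b, HasDerivAt y (-(ρ * y t + κ₁ * y t ^ γ₁ + κ₂ * y t ^ γ₂)) t)
    (hpos : ∀ t ∈ Icc a b, 0 < y t) :
    y b < 1 := by
  have hr : 0 < ρ / κ₂ := div_pos hρ hκ₂
  have hab : a ≤ b :=
    sub_nonneg.1 (nonneg_of_mul_eq_log_one_add (mul_pos hρ (by linarith)) hr.le hT)
  have key := rpow_add_mul_exp_le_of_ode hρ hκ₁ hγ₂ hab hode hpos
  rw [hT, exp_log (by linarith)] at key
  have hya := rpow_pos_of_pos (hpos a ⟨le_rfl, hab⟩) (1 - γ₂)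
  have hyb : 1 < y b ^ (1 - γ₂) := by
    have hr_inv : ρ / κ₂ * (κ₂ / ρ) = 1 := by field_simp
    linarith [mul_pos hya hr]
  by_contra! h
  linarith [rpow_le_one_of_one_le_of_nonpos h (by linarith : 1 - γ₂ ≤ 0)]

lemma exists_nonpos_of_ode (hρ : 0 < ρ) (hκ₁ : 0 < κ₁) (hκ₂ : 0 ≤ κ₂) (hγ₁ : γ₁ < 1)
    (hT : ρ * (1 - γ₁) * (b - a) = log (1 + ρ / κ₁))
    (hode : ∀ t ∈ Icc a b, HasDerivAt y (-(ρ * y t + κ₁ * y t ^ γ₁ + κ₂ * y t ^ γ₂)) t)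
    (hya : y a ≤ 1) :
    ∃ t ∈ Icc a b, y t ≤ 0 := by
  by_contra! hpos
  have hr : 0 < ρ / κ₁ := div_pos hρ hκ₁
  have hab : a ≤ b :=
    sub_nonneg.1 (nonneg_of_mul_eq_log_one_add (mul_pos hρ (by linarith)) hr.le hT)
  have key := rpow_add_le_mul_exp_of_ode hρ hκ₂ hγ₁ hab hode hpos
  rw [neg_mul, exp_neg, hT, exp_log (by linarith)] at key
  have hua : y a ^ (1 - γ₁) ≤ 1 := rpow_le_one (hpos a ⟨le_rfl, hab⟩).le hya (by linarith)
  have hub := rpow_pos_of_pos (hpos b ⟨hab, le_rfl⟩) (1 - γ₁)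
  have hr_inv : ρ / κ₁ * (κ₁ / ρ) = 1 := by field_simp
  have key' := (le_mul_inv_iff₀ (by linarith)).1 key
  linarith [mul_pos hub hr]

end PositiveSolution

lemma exists_mem_Icc_eq_zero_of_nonneg {ρ κ₁ κ₂ γ₁ γ₂ T₁ T₂ : ℝ} (hρ : 0 < ρ) (hκ₁ : 0 < κ₁)
    (hκ₂ : 0 < κ₂) (hγ₁ : γ₁ < 1) (hγ₂ : 1 < γ₂)
    (hT₂ : ρ * (γ₂ - 1) * T₂ = log (1 + ρ / κ₂)) (hT₁ : ρ * (1 - γ₁) * T₁ = log (1 + ρ / κ₁))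
    {x : ℝ → ℝ}
    (hode : ∀ t, 0 ≤ t →
      HasDerivAt x (-ρ * x t - κ₁ * spow (x t) γ₁ - κ₂ * spow (x t) γ₂) t)
    (hx0 : 0 ≤ x 0) :
    ∃ t ∈ Icc 0 (T₂ + T₁), x t = 0 := by
  by_contra! hne
  have hT₂0 := nonneg_of_mul_eq_log_one_add (mul_pos hρ (by linarith)) (div_pos hρ hκ₂).le hT₂
  have hT₁0 := nonneg_of_mul_eq_log_one_add (mul_pos hρ (by linarith)) (div_pos hρ hκ₁).le hT₁
  have h0 : (0 : ℝ) ∈ Icc 0 (T₂ + T₁) := ⟨le_rfl, by linarith⟩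
  have hpos := isPreconnected_Icc.pos_of_forall_ne_zero
    (fun t ht => (hode t ht.1).continuousAt.continuousWithinAt) h0
    (hx0.lt_of_ne (hne 0 h0).symm) hne
  have hode' : ∀ t ∈ Icc 0 (T₂ + T₁),
      HasDerivAt x (-(ρ * x t + κ₁ * x t ^ γ₁ + κ₂ * x t ^ γ₂)) t := fun t ht => by
    convert hode t ht.1 using 1
    rw [spow_of_pos (hpos t ht), spow_of_pos (hpos t ht)]
    ring
  have hsub₂ : Icc 0 T₂ ⊆ Icc 0 (T₂ + T₁) := Icc_subset_Icc le_rfl (by linarith)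
  have hsub₁ : Icc T₂ (T₂ + T₁) ⊆ Icc 0 (T₂ + T₁) := Icc_subset_Icc hT₂0 le_rfl
  have hxT₂ : x T₂ < 1 := lt_one_of_ode hρ hκ₁.le hκ₂ hγ₂ (by rwa [sub_zero])
    (fun t ht => hode' t (hsub₂ ht)) (fun t ht => hpos t (hsub₂ ht))
  obtain ⟨t, ht, hxt⟩ := exists_nonpos_of_ode hρ hκ₁ hκ₂.le hγ₁ (by rwa [add_sub_cancel_left])
    (fun t ht => hode' t (hsub₁ ht)) hxT₂.le
  exact (hpos t (hsub₁ ht)).not_ge hxt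

lemma exists_mem_Icc_eq_zero {ρ κ₁ κ₂ γ₁ γ₂ T₁ T₂ : ℝ} (hρ : 0 < ρ) (hκ₁ : 0 < κ₁)
    (hκ₂ : 0 < κ₂) (hγ₁ : γ₁ < 1) (hγ₂ : 1 < γ₂)
    (hT₂ : ρ * (γ₂ - 1) * T₂ = log (1 + ρ / κ₂)) (hT₁ : ρ * (1 - γ₁) * T₁ = log (1 + ρ / κ₁))
    {x : ℝ → ℝ}
    (hode : ∀ t, 0 ≤ t →
      HasDerivAt x (-ρ * x t - κ₁ * spow (x t) γ₁ - κ₂ * spow (x t) γ₂) t) :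
    ∃ t ∈ Icc 0 (T₂ + T₁), x t = 0 := by
  rcases lt_or_ge (x 0) 0 with hx0 | hx0
  · have hode_neg : ∀ t, 0 ≤ t → HasDerivAt (fun s => -x s)
        (-ρ * -x t - κ₁ * spow (-x t) γ₁ - κ₂ * spow (-x t) γ₂) t := fun t ht =>
      (hode t ht).neg.congr_deriv (by rw [spow_neg, spow_neg]; ring)
    obtain ⟨t, ht, hxt⟩ :=
      exists_mem_Icc_eq_zero_of_nonneg hρ hκ₁ hκ₂ hγ₁ hγ₂ hT₂ hT₁ hode_neg (neg_nonneg.2 hx0.le)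
    exact ⟨t, ht, neg_eq_zero.1 hxt⟩
  · exact exists_mem_Icc_eq_zero_of_nonneg hρ hκ₁ hκ₂ hγ₁ hγ₂ hT₂ hT₁ hode hx0

theorem stmt_6_general (ρ κ₁ κ₂ γ₁ γ₂ : ℝ)
    (hρ : 0 < ρ) (hκ₁ : 0 < κ₁) (hκ₂ : 0 < κ₂)
    (hγ₁1 : γ₁ < 1) (hγ₂ : 1 < γ₂)
    (x : ℝ → ℝ)
    (hode : ∀ t, 0 ≤ t →
      HasDerivAt x (-ρ * x t - κ₁ * spow (x t) γ₁ - κ₂ * spow (x t) γ₂) t) :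
    (∃ t, 0 ≤ t ∧ x t = 0) ∧
    sInf {t : ℝ | 0 ≤ t ∧ x t = 0} ≤
      1 / (ρ * (γ₂ - 1)) * Real.log (1 + ρ / κ₂) +
      1 / (ρ * (1 - γ₁)) * Real.log (1 + ρ / κ₁) := by
  have hc₂ : ρ * (γ₂ - 1) ≠ 0 := (mul_pos hρ (by linarith)).ne'
  have hc₁ : ρ * (1 - γ₁) ≠ 0 := (mul_pos hρ (by linarith)).ne'
  obtain ⟨t, ht, hxt⟩ := exists_mem_Icc_eq_zero hρ hκ₁ hκ₂ hγ₁1 hγ₂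
    (T₂ := 1 / (ρ * (γ₂ - 1)) * Real.log (1 + ρ / κ₂))
    (T₁ := 1 / (ρ * (1 - γ₁)) * Real.log (1 + ρ / κ₁))
    (by rw [← mul_assoc, mul_one_div_cancel hc₂, one_mul])
    (by rw [← mul_assoc, mul_one_div_cancel hc₁, one_mul]) hode
  have hbdd : BddBelow {t : ℝ | 0 ≤ t ∧ x t = 0} := ⟨0, fun _ hs => hs.1⟩
  exact ⟨⟨t, ht.1, hxt⟩, (csInf_le hbdd ⟨ht.1, hxt⟩).trans ht.2⟩

theorem stmt_6 (ρ κ₁ κ₂ γ₁ γ₂ : ℝ)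
    (hρ : 0 < ρ) (hκ₁ : 0 < κ₁) (hκ₂ : 0 < κ₂)
    (hγ₁0 : 0 < γ₁) (hγ₁1 : γ₁ < 1) (hγ₂ : 1 < γ₂)
    (x : ℝ → ℝ) (x₀ : ℝ) (hx0 : x 0 = x₀)
    (hode : ∀ t, 0 ≤ t →
      HasDerivAt x (-ρ * x t - κ₁ * spow (x t) γ₁ - κ₂ * spow (x t) γ₂) t) :
    (∃ t, 0 ≤ t ∧ x t = 0) ∧
    sInf {t : ℝ | 0 ≤ t ∧ x t = 0} ≤
      1 / (ρ * (γ₂ - 1)) * Real.log (1 + ρ / κ₂) +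
      1 / (ρ * (1 - γ₁)) * Real.log (1 + ρ / κ₁) :=
  stmt_6_general ρ κ₁ κ₂ γ₁ γ₂ hρ hκ₁ hκ₂ hγ₁1 hγ₂ x hode
end

section
/- For the scalar ODE ẋ = −ρx − κ₁|x|^{γ₁} sgn(x) − κ₂|x|^{γ₂} sgn(x) with ρ, κ₁, κ₂ > 0, 0 < γ₁ < 1 < γ₂, and |x₀| < 1, the settling time satisfies T(x₀) ≤ (1/(ρ(1−γ₁))) ln(1 + (ρ/κ₁)|x₀|^{1−γ₁}). -/
open Set

noncomputable def attractingLaw (ρ κ₁ κ₂ γ₁ γ₂ y : ℝ) : ℝ :=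
  -ρ * y - κ₁ * spow y γ₁ - κ₂ * spow y γ₂

theorem lt_log_one_add_of_deriv_right_le {W W' : ℝ → ℝ} {a b T : ℝ} (ha : 0 < a) (hb : 0 < b)
    (hT : 0 ≤ T) (hW : ContinuousOn W (Icc 0 T))
    (hW' : ∀ t ∈ Ico 0 T, HasDerivWithinAt W (W' t) (Ici t) t)
    (bound : ∀ t ∈ Ico 0 T, W' t ≤ -a * W t - b) (hWT : 0 < W T) :
    T < 1 / a * Real.log (1 + a / b * W 0) := by
  have hG := le_gronwallBound_of_liminf_deriv_right_le hW
    (fun t ht _ hr => (hW' t ht).liminf_right_slope_le hr) le_rfl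
    (fun t ht => (bound t ht).trans_eq (sub_eq_add_neg _ _)) T ⟨hT, le_rfl⟩
  simp only [gronwallBound_of_K_ne_0 (neg_ne_zero.2 ha.ne'), sub_zero, neg_mul, Real.exp_neg,
    neg_div_neg_eq] at hG
  have hE := Real.exp_pos (a * T)
  have key : Real.exp (a * T) < 1 + a / b * W 0 := by
    have hpos : 0 < W 0 * (Real.exp (a * T))⁻¹ + b / a * ((Real.exp (a * T))⁻¹ - 1) :=
      hWT.trans_le hG
    rw [← sub_pos]
    field_simp at hpos ⊢
    linarith
  rw [one_div, ← div_eq_inv_mul, lt_div_iff₀ ha, mul_comm, ← Real.exp_lt_exp,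
    Real.exp_log (hE.trans key)]
  exact key

theorem sign_mul_spow {y : ℝ} (hy : y ≠ 0) (γ : ℝ) :
    (SignType.sign y : ℝ) * spow y γ = |y| ^ γ := by
  rcases hy.lt_or_gt with h | h <;> simp [spow, h, Real.sign_of_neg, Real.sign_of_pos]

theorem sign_mul_attractingLaw {y : ℝ} (hy : y ≠ 0) (ρ κ₁ κ₂ γ₁ γ₂ : ℝ) :
    (SignType.sign y : ℝ) * attractingLaw ρ κ₁ κ₂ γ₁ γ₂ y =
      -(ρ * |y| + κ₁ * |y| ^ γ₁ + κ₂ * |y| ^ γ₂) := by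
  rw [attractingLaw, ← sign_mul_spow hy, ← sign_mul_spow hy, ← sign_mul_self]
  ring

theorem HasDerivAt.abs_rpow {f : ℝ → ℝ} {f' t : ℝ} (hf : HasDerivAt f f' t) (h0 : f t ≠ 0)
    (p : ℝ) :
    HasDerivAt (fun s => |f s| ^ p) (SignType.sign (f t) * f' * p * |f t| ^ (p - 1)) t :=
  ((hasDerivAt_abs h0).comp t hf).rpow_const (Or.inl (abs_ne_zero.2 h0))

theorem HasDerivAt.abs_rpow_of_attractingLaw {x : ℝ → ℝ} {t ρ κ₁ κ₂ γ₁ γ₂ : ℝ}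
    (hx : HasDerivAt x (attractingLaw ρ κ₁ κ₂ γ₁ γ₂ (x t)) t) (h0 : x t ≠ 0) :
    HasDerivAt (fun s => |x s| ^ (1 - γ₁))
      (-(1 - γ₁) * (ρ * |x t| ^ (1 - γ₁) + κ₁ + κ₂ * |x t| ^ (γ₂ - γ₁))) t := by
  convert hx.abs_rpow h0 (1 - γ₁) using 1
  have ha : 0 < |x t| := abs_pos.2 h0
  rw [sign_mul_attractingLaw h0, sub_sub_cancel_left, Real.rpow_sub ha, Real.rpow_sub ha,
    Real.rpow_neg ha.le, Real.rpow_one]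
  field_simp

theorem stmt_7_general (ρ κ₁ κ₂ γ₁ γ₂ : ℝ)
    (hρ : 0 < ρ) (hκ₁ : 0 < κ₁) (hκ₂ : 0 < κ₂)
    (hγ₁1 : γ₁ < 1)
    (x : ℝ → ℝ) (x₀ : ℝ) (hx0 : x 0 = x₀)
    (hode : ∀ t, 0 ≤ t →
      HasDerivAt x (-ρ * x t - κ₁ * spow (x t) γ₁ - κ₂ * spow (x t) γ₂) t) :
    (∃ t, 0 ≤ t ∧ x t = 0) ∧
    sInf {t : ℝ | 0 ≤ t ∧ x t = 0} ≤
      1 / (ρ * (1 - γ₁)) * Real.log (1 + ρ / κ₁ * |x₀| ^ (1 - γ₁)) := by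
  set T := 1 / (ρ * (1 - γ₁)) * Real.log (1 + ρ / κ₁ * |x₀| ^ (1 - γ₁))
  have hp : 0 < 1 - γ₁ := sub_pos.2 hγ₁1
  have hT : 0 ≤ T :=
    mul_nonneg (by positivity) (Real.log_nonneg (le_add_of_nonneg_right (by positivity)))
  obtain ⟨t, ⟨ht, htT⟩, hxt⟩ : ∃ t ∈ Icc 0 T, x t = 0 := by
    by_contra! hne
    have hW (t : ℝ) (ht : t ∈ Icc 0 T) :=
      (hode t ht.1).abs_rpow_of_attractingLaw (hne t ht)
    have hlt := lt_log_one_add_of_deriv_right_le (a := ρ * (1 - γ₁)) (b := κ₁ * (1 - γ₁))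
      (by positivity) (by positivity) hT
      (fun t ht => (hW t ht).continuousAt.continuousWithinAt)
      (fun t ht => (hW t (Ico_subset_Icc_self ht)).hasDerivWithinAt)
      (fun t _ => by
        have := Real.rpow_nonneg (abs_nonneg (x t)) (γ₂ - γ₁)
        nlinarith [mul_nonneg hp.le hκ₂.le])
      (Real.rpow_pos_of_pos (abs_pos.2 (hne T ⟨hT, le_rfl⟩)) _)
    rw [mul_div_mul_right _ _ hp.ne', hx0] at hlt
    exact hlt.false
  have hbdd : BddBelow {t : ℝ | 0 ≤ t ∧ x t = 0} := ⟨0, fun _ hs => hs.1⟩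
  exact ⟨⟨t, ht, hxt⟩, (csInf_le hbdd ⟨ht, hxt⟩).trans htT⟩

theorem stmt_7 (ρ κ₁ κ₂ γ₁ γ₂ : ℝ)
    (hρ : 0 < ρ) (hκ₁ : 0 < κ₁) (hκ₂ : 0 < κ₂)
    (hγ₁0 : 0 < γ₁) (hγ₁1 : γ₁ < 1) (hγ₂ : 1 < γ₂)
    (x : ℝ → ℝ) (x₀ : ℝ) (hx0 : x 0 = x₀) (hx₀ : |x₀| < 1)
    (hode : ∀ t, 0 ≤ t →
      HasDerivAt x (-ρ * x t - κ₁ * spow (x t) γ₁ - κ₂ * spow (x t) γ₂) t) :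
    (∃ t, 0 ≤ t ∧ x t = 0) ∧
    sInf {t : ℝ | 0 ≤ t ∧ x t = 0} ≤
      1 / (ρ * (1 - γ₁)) * Real.log (1 + ρ / κ₁ * |x₀| ^ (1 - γ₁)) :=
  stmt_7_general ρ κ₁ κ₂ γ₁ γ₂ hρ hκ₁ hκ₂ hγ₁1 x x₀ hx0 hode
end

section
/- For the double-power ODE ẋ = −κ₁|x|^{γ₁} sgn(x) − κ₂|x|^{γ₂} sgn(x) with κ₁, κ₂ > 0, 0 < γ₁ < 1 < γ₂ and 0 < |x₀| < 1, the settling time satisfies ln(1 + (κ₂/κ₁)|x₀|^{1−γ₁})/(κ₂(1−γ₁)) ≤ T(x₀) ≤ |x₀|^{1−γ₁}/(κ₁(1−γ₁)). -/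
open Set

theorem sub_le_mul_sub_of_hasDerivAt_le {f f' : ℝ → ℝ} {a b C : ℝ} (hab : a ≤ b)
    (hf : ContinuousOn f (Icc a b)) (hf' : ∀ t ∈ Ioo a b, HasDerivAt f (f' t) t)
    (hle : ∀ t ∈ Ioo a b, f' t ≤ C) : f b - f a ≤ C * (b - a) := by
  refine (convex_Icc a b).image_sub_le_mul_sub_of_deriv_le hf ?_ ?_ a (left_mem_Icc.2 hab) b
    (right_mem_Icc.2 hab) hab <;> rw [interior_Icc]
  · exact fun t ht => (hf' t ht).differentiableAt.differentiableWithinAt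
  · exact fun t ht => (hf' t ht).deriv ▸ hle t ht

theorem mul_sub_le_sub_of_le_hasDerivAt {f f' : ℝ → ℝ} {a b C : ℝ} (hab : a ≤ b)
    (hf : ContinuousOn f (Icc a b)) (hf' : ∀ t ∈ Ioo a b, HasDerivAt f (f' t) t)
    (hle : ∀ t ∈ Ioo a b, C ≤ f' t) : C * (b - a) ≤ f b - f a := by
  refine (convex_Icc a b).mul_sub_le_image_sub_of_le_deriv hf ?_ ?_ a (left_mem_Icc.2 hab) b
    (right_mem_Icc.2 hab) hab <;> rw [interior_Icc]
  · exact fun t ht => (hf' t ht).differentiableAt.differentiableWithinAt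
  · exact fun t ht => (hf' t ht).deriv ▸ hle t ht

theorem log_add_mul_sub_le_of_le_hasDerivAt {V V' : ℝ → ℝ} {a b c κ₁ κ₂ : ℝ} (hab : a ≤ b)
    (hκ₁ : 0 < κ₁) (hκ₂ : 0 ≤ κ₂) (hV : ∀ t ∈ Icc a b, 0 ≤ V t)
    (hcont : ContinuousOn V (Icc a b)) (hV' : ∀ t ∈ Ioo a b, HasDerivAt V (V' t) t)
    (hle : ∀ t ∈ Ioo a b, -(c * (κ₁ + κ₂ * V t)) ≤ V' t) :
    Real.log (κ₁ + κ₂ * V a) - Real.log (κ₁ + κ₂ * V b) ≤ κ₂ * c * (b - a) := by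
  have hpos : ∀ t ∈ Icc a b, 0 < κ₁ + κ₂ * V t := fun t ht =>
    add_pos_of_pos_of_nonneg hκ₁ (mul_nonneg hκ₂ (hV t ht))
  have key := mul_sub_le_sub_of_le_hasDerivAt (C := -(κ₂ * c)) hab
    (f := fun t => Real.log (κ₁ + κ₂ * V t)) (f' := fun t => κ₂ * V' t / (κ₁ + κ₂ * V t))
    ((continuousOn_const.add (continuousOn_const.mul hcont)).log fun t ht => (hpos t ht).ne')
    (fun t ht => (((hV' t ht).const_mul κ₂).const_add κ₁).log (hpos t (Ioo_subset_Icc_self ht)).ne')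
    (fun t ht => by
      rw [le_div_iff₀ (hpos t (Ioo_subset_Icc_self ht))]
      nlinarith [mul_le_mul_of_nonneg_left (hle t ht) hκ₂])
  linarith

theorem HasDerivAt.abs_rpow_const {f : ℝ → ℝ} {f' t p : ℝ} (hf : HasDerivAt f f' t)
    (hne : f t ≠ 0) :
    HasDerivAt (fun s => |f s| ^ p) (p * |f t| ^ (p - 1) * (SignType.sign (f t) * f')) t := by
  have hpow : HasDerivAt (fun y => y ^ p) (p * |f t| ^ (p - 1)) |f t| :=
    Real.hasDerivAt_rpow_const (Or.inl (abs_pos.2 hne).ne')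
  exact hpow.comp t ((hasDerivAt_abs hne).comp t hf)

theorem sInf_zeros_mem {x : ℝ → ℝ} (hx : ContinuousOn x (Ici 0)) (h : ∃ t, 0 ≤ t ∧ x t = 0) :
    sInf {t | 0 ≤ t ∧ x t = 0} ∈ {t : ℝ | 0 ≤ t ∧ x t = 0} :=
  (hx.preimage_isClosed_of_isClosed isClosed_Ici isClosed_singleton).csInf_mem h
    ⟨0, fun _ h => h.1⟩

theorem neg_mul_add_rpow_le {κ₁ κ₂ γ₁ : ℝ} (hκ₂ : 0 ≤ κ₂) (hγ₁ : γ₁ < 1) (y γ : ℝ) :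
    -((1 - γ₁) * (κ₁ + κ₂ * |y| ^ γ)) ≤ -(κ₁ * (1 - γ₁)) := by
  nlinarith [mul_nonneg (mul_nonneg (sub_nonneg.2 hγ₁.le) hκ₂) (Real.rpow_nonneg (abs_nonneg y) γ)]

def IsDoublePowerSolution (κ₁ κ₂ γ₁ γ₂ : ℝ) (x : ℝ → ℝ) : Prop :=
  ∀ t, 0 ≤ t → HasDerivAt x (-κ₁ * spow (x t) γ₁ - κ₂ * spow (x t) γ₂) t

namespace IsDoublePowerSolution

variable {κ₁ κ₂ γ₁ γ₂ : ℝ} {x : ℝ → ℝ}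

theorem continuousOn (h : IsDoublePowerSolution κ₁ κ₂ γ₁ γ₂ x) : ContinuousOn x (Ici 0) :=
  fun t ht => (h t ht).continuousAt.continuousWithinAt

theorem continuousOn_abs_rpow (h : IsDoublePowerSolution κ₁ κ₂ γ₁ γ₂ x) (hγ₁ : γ₁ < 1) :
    ContinuousOn (fun t => |x t| ^ (1 - γ₁)) (Ici 0) :=
  h.continuousOn.abs.rpow_const fun _ _ => Or.inr (by linarith)

theorem hasDerivAt_abs_rpow (h : IsDoublePowerSolution κ₁ κ₂ γ₁ γ₂ x) {t : ℝ} (ht : 0 ≤ t)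
    (hne : x t ≠ 0) :
    HasDerivAt (fun s => |x s| ^ (1 - γ₁)) (-((1 - γ₁) * (κ₁ + κ₂ * |x t| ^ (γ₂ - γ₁)))) t := by
  convert (h t ht).abs_rpow_const (p := 1 - γ₁) hne using 1
  have ha := abs_pos.2 hne
  have e₁ : |x t| ^ (1 - γ₁ - 1) * |x t| ^ γ₁ = 1 := by
    rw [← Real.rpow_add ha]; norm_num
  have e₂ : |x t| ^ (1 - γ₁ - 1) * |x t| ^ γ₂ = |x t| ^ (γ₂ - γ₁) := by
    rw [← Real.rpow_add ha]; ring_nf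
  linear_combination (1 - γ₁) * κ₁ * |x t| ^ (1 - γ₁ - 1) * sign_mul_spow hne γ₁
    + (1 - γ₁) * κ₂ * |x t| ^ (1 - γ₁ - 1) * sign_mul_spow hne γ₂
    + (1 - γ₁) * κ₁ * e₁ + (1 - γ₁) * κ₂ * e₂

theorem exists_zero_mem_Icc (h : IsDoublePowerSolution κ₁ κ₂ γ₁ γ₂ x) (hκ₁ : 0 < κ₁)
    (hκ₂ : 0 ≤ κ₂) (hγ₁ : γ₁ < 1) :
    ∃ t ∈ Icc 0 (|x 0| ^ (1 - γ₁) / (κ₁ * (1 - γ₁))), x t = 0 := by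
  set T := |x 0| ^ (1 - γ₁) / (κ₁ * (1 - γ₁))
  have hγ : 0 < 1 - γ₁ := by linarith
  have hT : 0 ≤ T := by positivity
  by_contra! hne
  have hdecay : |x T| ^ (1 - γ₁) - |x 0| ^ (1 - γ₁) ≤ -(κ₁ * (1 - γ₁)) * (T - 0) :=
    sub_le_mul_sub_of_hasDerivAt_le hT ((h.continuousOn_abs_rpow hγ₁).mono Icc_subset_Ici_self)
      (fun t ht => h.hasDerivAt_abs_rpow ht.1.le (hne t (Ioo_subset_Icc_self ht)))
      (fun t _ => neg_mul_add_rpow_le hκ₂ hγ₁ (x t) _)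
  have hxT : 0 < |x T| ^ (1 - γ₁) :=
    Real.rpow_pos_of_pos (abs_pos.2 (hne T ⟨hT, le_rfl⟩)) _
  have hκT : κ₁ * (1 - γ₁) * T = |x 0| ^ (1 - γ₁) := by
    simp only [T]; field_simp
  linarith

theorem abs_rpow_le_abs_rpow_zero (h : IsDoublePowerSolution κ₁ κ₂ γ₁ γ₂ x) (hκ₁ : 0 ≤ κ₁)
    (hκ₂ : 0 ≤ κ₂) (hγ₁ : γ₁ < 1) {t : ℝ} (ht : 0 ≤ t) (hne : ∀ s ∈ Ioo 0 t, x s ≠ 0) :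
    |x t| ^ (1 - γ₁) ≤ |x 0| ^ (1 - γ₁) := by
  have hγ : 0 < 1 - γ₁ := by linarith
  have := sub_le_mul_sub_of_hasDerivAt_le ht
    ((h.continuousOn_abs_rpow hγ₁).mono Icc_subset_Ici_self)
    (fun s hs => h.hasDerivAt_abs_rpow hs.1.le (hne s hs)) (C := 0)
    (fun s _ => (neg_mul_add_rpow_le hκ₂ hγ₁ (x s) _).trans (by nlinarith))
  linarith

theorem log_div_le_of_first_zero (h : IsDoublePowerSolution κ₁ κ₂ γ₁ γ₂ x) (hκ₁ : 0 < κ₁)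
    (hκ₂ : 0 < κ₂) (hγ₁ : γ₁ < 1) (hγ₂ : 1 ≤ γ₂) (hx₀ : |x 0| ≤ 1) {T : ℝ} (hT : 0 ≤ T)
    (hne : ∀ s ∈ Ico 0 T, x s ≠ 0) (hxT : x T = 0) :
    Real.log (1 + κ₂ / κ₁ * |x 0| ^ (1 - γ₁)) / (κ₂ * (1 - γ₁)) ≤ T := by
  have hγ : 0 < 1 - γ₁ := by linarith
  have habs : ∀ t ∈ Ioo 0 T, |x t| ≤ 1 := fun t ht => by
    by_contra! hlt
    have := h.abs_rpow_le_abs_rpow_zero hκ₁.le hκ₂.le hγ₁ ht.1.le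
      (fun s hs => hne s ⟨hs.1.le, hs.2.trans ht.2⟩)
    linarith [Real.one_lt_rpow hlt hγ, Real.rpow_le_one (abs_nonneg _) hx₀ hγ.le]
  have key := log_add_mul_sub_le_of_le_hasDerivAt hT hκ₁ hκ₂.le (c := 1 - γ₁)
    (fun t _ => Real.rpow_nonneg (abs_nonneg (x t)) (1 - γ₁))
    ((h.continuousOn_abs_rpow hγ₁).mono Icc_subset_Ici_self)
    (fun t ht => h.hasDerivAt_abs_rpow ht.1.le (hne t (Ioo_subset_Ico_self ht)))
    (fun t ht => by
      have hpow : |x t| ^ (γ₂ - γ₁) ≤ |x t| ^ (1 - γ₁) :=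
        Real.rpow_le_rpow_of_exponent_ge (abs_pos.2 (hne t (Ioo_subset_Ico_self ht)))
          (habs t ht) (by linarith)
      nlinarith [mul_le_mul_of_nonneg_left hpow (mul_nonneg hγ.le hκ₂.le)])
  have hlog : Real.log (1 + κ₂ / κ₁ * |x 0| ^ (1 - γ₁)) =
      Real.log (κ₁ + κ₂ * |x 0| ^ (1 - γ₁)) - Real.log κ₁ := by
    rw [← Real.log_div (by positivity) hκ₁.ne']
    congr 1
    field_simp
  rw [hxT, abs_zero, Real.zero_rpow hγ.ne', mul_zero, add_zero] at key
  rw [div_le_iff₀ (by positivity), hlog]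
  linarith

end IsDoublePowerSolution

theorem stmt_11_general (κ₁ κ₂ γ₁ γ₂ : ℝ)
    (hκ₁ : 0 < κ₁) (hκ₂ : 0 < κ₂)
    (hγ₁1 : γ₁ < 1) (hγ₂ : 1 < γ₂)
    (x : ℝ → ℝ) (x₀ : ℝ) (hx0 : x 0 = x₀) (hx₀1 : |x₀| < 1)
    (hode : ∀ t, 0 ≤ t →
      HasDerivAt x (-κ₁ * spow (x t) γ₁ - κ₂ * spow (x t) γ₂) t) :
    Real.log (1 + κ₂ / κ₁ * |x₀| ^ (1 - γ₁)) / (κ₂ * (1 - γ₁)) ≤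
      sInf {t : ℝ | 0 ≤ t ∧ x t = 0} ∧
    sInf {t : ℝ | 0 ≤ t ∧ x t = 0} ≤ |x₀| ^ (1 - γ₁) / (κ₁ * (1 - γ₁)) := by
  subst hx0
  have hsol : IsDoublePowerSolution κ₁ κ₂ γ₁ γ₂ x := hode
  obtain ⟨t₀, ht₀, hzero⟩ := hsol.exists_zero_mem_Icc hκ₁ hκ₂.le hγ₁1
  have hbdd : BddBelow {t : ℝ | 0 ≤ t ∧ x t = 0} := ⟨0, fun _ h => h.1⟩
  obtain ⟨hT, hxT⟩ := sInf_zeros_mem hsol.continuousOn ⟨t₀, ht₀.1, hzero⟩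
  have hne : ∀ s ∈ Ico 0 (sInf {t : ℝ | 0 ≤ t ∧ x t = 0}), x s ≠ 0 := fun s hs h0 =>
    notMem_of_lt_csInf hs.2 hbdd ⟨hs.1, h0⟩
  exact ⟨hsol.log_div_le_of_first_zero hκ₁ hκ₂ hγ₁1 hγ₂.le hx₀1.le hT hne hxT,
    (csInf_le hbdd ⟨ht₀.1, hzero⟩).trans ht₀.2⟩

theorem stmt_11 (κ₁ κ₂ γ₁ γ₂ : ℝ)
    (hκ₁ : 0 < κ₁) (hκ₂ : 0 < κ₂)
    (hγ₁0 : 0 < γ₁) (hγ₁1 : γ₁ < 1) (hγ₂ : 1 < γ₂)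
    (x : ℝ → ℝ) (x₀ : ℝ) (hx0 : x 0 = x₀) (hx₀0 : 0 < |x₀|) (hx₀1 : |x₀| < 1)
    (hode : ∀ t, 0 ≤ t →
      HasDerivAt x (-κ₁ * spow (x t) γ₁ - κ₂ * spow (x t) γ₂) t) :
    Real.log (1 + κ₂ / κ₁ * |x₀| ^ (1 - γ₁)) / (κ₂ * (1 - γ₁)) ≤
      sInf {t : ℝ | 0 ≤ t ∧ x t = 0} ∧
    sInf {t : ℝ | 0 ≤ t ∧ x t = 0} ≤ |x₀| ^ (1 - γ₁) / (κ₁ * (1 - γ₁)) :=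
  stmt_11_general κ₁ κ₂ γ₁ γ₂ hκ₁ hκ₂ hγ₁1 hγ₂ x x₀ hx0 hx₀1 hode
end

section
/- If a nonnegative absolutely continuous function Λ satisfies Λ̇ ≤ −κ₁Λ^{γ₁} − κ₂Λ^{γ₂} for almost every t with Λ(t) > 0, where κ₁, κ₂ > 0 and 0 < γ₁ < 1 < γ₂, then Λ(t) = 0 for all t ≥ T* := 1/(κ₁(1−γ₁)) + 1/(κ₂(γ₂−1)), regardless of Λ(0). -/
open MeasureTheory Set intervalIntegral Filter Topology


noncomputable def Hf (κ₁ κ₂ γ₁ γ₂ s : ℝ) : ℝ := κ₁ * s ^ γ₁ + κ₂ * s ^ γ₂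
noncomputable def Phi (κ₁ κ₂ γ₁ γ₂ x : ℝ) : ℝ := ∫ s in (0:ℝ)..x, (Hf κ₁ κ₂ γ₁ γ₂ s)⁻¹

section Aux
variable {κ₁ κ₂ γ₁ γ₂ : ℝ} (hκ₁ : 0 < κ₁) (hκ₂ : 0 < κ₂)
  (hγ₁0 : 0 < γ₁) (hγ₁1 : γ₁ < 1) (hγ₂ : 1 < γ₂)

include hγ₁0 hγ₂ in
lemma Hcont : Continuous (fun s => Hf κ₁ κ₂ γ₁ γ₂ s) := by
  apply Continuous.add
  · exact continuous_const.mul (continuous_iff_continuousAt.2 fun x =>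
      Real.continuousAt_rpow_const x γ₁ (Or.inr hγ₁0.le))
  · exact continuous_const.mul (continuous_iff_continuousAt.2 fun x =>
      Real.continuousAt_rpow_const x γ₂ (Or.inr (by linarith)))

include hκ₁ hκ₂ in
lemma Hnonneg {s : ℝ} (hs : 0 ≤ s) : 0 ≤ Hf κ₁ κ₂ γ₁ γ₂ s := by
  have := Real.rpow_nonneg hs γ₁; have := Real.rpow_nonneg hs γ₂
  unfold Hf; nlinarith

include hκ₁ hκ₂ in
lemma Hpos {s : ℝ} (hs : 0 < s) : 0 < Hf κ₁ κ₂ γ₁ γ₂ s := by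
  have := Real.rpow_pos_of_pos hs γ₁; have := Real.rpow_nonneg hs.le γ₂
  unfold Hf; nlinarith

include hκ₁ hκ₂ hγ₁0 hγ₂ in
lemma Hmono {s t : ℝ} (hs : 0 ≤ s) (hst : s ≤ t) :
    Hf κ₁ κ₂ γ₁ γ₂ s ≤ Hf κ₁ κ₂ γ₁ γ₂ t := by
  have h1 := Real.rpow_le_rpow hs hst hγ₁0.le
  have h2 := Real.rpow_le_rpow hs hst (by linarith : (0:ℝ) ≤ γ₂)
  unfold Hf; nlinarith

include hγ₁0 hγ₂ in
lemma Hzero : Hf κ₁ κ₂ γ₁ γ₂ 0 = 0 := by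
  unfold Hf
  rw [Real.zero_rpow hγ₁0.ne', Real.zero_rpow (by linarith : γ₂ ≠ 0)]; ring

include hκ₁ hκ₂ hγ₁0 hγ₁1 hγ₂ in
lemma Hinv_int {x : ℝ} (hx : 0 ≤ x) :
    IntervalIntegrable (fun s => (Hf κ₁ κ₂ γ₁ γ₂ s)⁻¹) volume 0 x := by
  have hdom : IntervalIntegrable (fun s => κ₁⁻¹ * s ^ (-γ₁)) volume 0 x :=
    (intervalIntegrable_rpow' (by linarith)).const_mul _
  refine hdom.mono_fun ?_ ?_
  · apply Measurable.aestronglyMeasurable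
    apply Measurable.inv
    apply Measurable.add <;> exact (measurable_id.pow_const _).const_mul _
  · filter_upwards [ae_restrict_mem measurableSet_uIoc] with s hs
    rw [uIoc_of_le hx] at hs
    have hs0 : 0 < s := hs.1
    have h1 : 0 < κ₁ * s ^ γ₁ := by positivity
    have h2 : 0 ≤ κ₂ * s ^ γ₂ := by positivity
    have hHpos : 0 < Hf κ₁ κ₂ γ₁ γ₂ s := Hpos hκ₁ hκ₂ hs0
    rw [Real.norm_of_nonneg (inv_nonneg.2 hHpos.le),
      Real.norm_of_nonneg (by positivity)]
    have hle : (Hf κ₁ κ₂ γ₁ γ₂ s)⁻¹ ≤ (κ₁ * s ^ γ₁)⁻¹ := by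
      apply inv_anti₀ h1
      unfold Hf; linarith
    calc (Hf κ₁ κ₂ γ₁ γ₂ s)⁻¹ ≤ (κ₁ * s ^ γ₁)⁻¹ := hle
      _ = κ₁⁻¹ * s ^ (-γ₁) := by
        rw [mul_inv, Real.rpow_neg hs0.le]

include hκ₁ hκ₂ hγ₁0 hγ₁1 hγ₂ in
lemma Phi_sub {u v : ℝ} (hu : 0 ≤ u) (huv : u ≤ v) :
    Phi κ₁ κ₂ γ₁ γ₂ v - Phi κ₁ κ₂ γ₁ γ₂ u = ∫ s in u..v, (Hf κ₁ κ₂ γ₁ γ₂ s)⁻¹ := by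
  have hv : IntervalIntegrable (fun s => (Hf κ₁ κ₂ γ₁ γ₂ s)⁻¹) volume 0 v :=
    Hinv_int hκ₁ hκ₂ hγ₁0 hγ₁1 hγ₂ (hu.trans huv)
  have h1 : IntervalIntegrable (fun s => (Hf κ₁ κ₂ γ₁ γ₂ s)⁻¹) volume 0 u :=
    hv.mono_set (by rw [uIcc_of_le hu, uIcc_of_le (hu.trans huv)]; exact Icc_subset_Icc le_rfl huv)
  have h2 : IntervalIntegrable (fun s => (Hf κ₁ κ₂ γ₁ γ₂ s)⁻¹) volume u v :=
    hv.mono_set (by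
      rw [uIcc_of_le huv, uIcc_of_le (hu.trans huv)]; exact Icc_subset_Icc hu le_rfl)
  have := integral_add_adjacent_intervals h1 h2
  unfold Phi; linarith

include hκ₁ hκ₂ in
lemma Phi_nonneg {x : ℝ} (hx : 0 ≤ x) : 0 ≤ Phi κ₁ κ₂ γ₁ γ₂ x := by
  apply intervalIntegral.integral_nonneg hx
  intro u hu
  exact inv_nonneg.2 (Hnonneg hκ₁ hκ₂ hu.1)

include hκ₁ hκ₂ hγ₁0 hγ₁1 hγ₂ in
lemma Phi_mono {u v : ℝ} (hu : 0 ≤ u) (huv : u ≤ v) :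
    Phi κ₁ κ₂ γ₁ γ₂ u ≤ Phi κ₁ κ₂ γ₁ γ₂ v := by
  have h := Phi_sub hκ₁ hκ₂ hγ₁0 hγ₁1 hγ₂ hu huv
  have h2 : 0 ≤ ∫ s in u..v, (Hf κ₁ κ₂ γ₁ γ₂ s)⁻¹ :=
    intervalIntegral.integral_nonneg huv fun s hs => inv_nonneg.2 (Hnonneg hκ₁ hκ₂ (hu.trans hs.1))
  linarith

include hκ₁ hκ₂ hγ₁0 hγ₁1 hγ₂ in
lemma Phi_lower {u v : ℝ} (hu : 0 < u) (huv : u ≤ v) :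
    (v - u) * (Hf κ₁ κ₂ γ₁ γ₂ v)⁻¹ ≤ Phi κ₁ κ₂ γ₁ γ₂ v - Phi κ₁ κ₂ γ₁ γ₂ u := by
  rw [Phi_sub hκ₁ hκ₂ hγ₁0 hγ₁1 hγ₂ hu.le huv]
  have hHv : 0 < Hf κ₁ κ₂ γ₁ γ₂ v := Hpos hκ₁ hκ₂ (hu.trans_le huv)
  have hconst : ∫ _s in u..v, (Hf κ₁ κ₂ γ₁ γ₂ v)⁻¹ = (v - u) * (Hf κ₁ κ₂ γ₁ γ₂ v)⁻¹ := by
    rw [intervalIntegral.integral_const]; simp [smul_eq_mul]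
  rw [← hconst]
  apply intervalIntegral.integral_mono_on huv (by simp) ?_ ?_
  · exact (Hinv_int hκ₁ hκ₂ hγ₁0 hγ₁1 hγ₂ (hu.le.trans huv)).mono_set
      (by rw [uIcc_of_le huv, uIcc_of_le (hu.le.trans huv)]; exact Icc_subset_Icc hu.le le_rfl)
  · intro s hs
    exact inv_anti₀ (Hpos hκ₁ hκ₂ (hu.trans_le hs.1))
      (Hmono hκ₁ hκ₂ hγ₁0 hγ₂ (hu.le.trans hs.1) hs.2)

include hκ₁ hκ₂ hγ₁0 hγ₁1 hγ₂ in
lemma Phi_le_T₁ {x : ℝ} (hx : 0 ≤ x) (hx1 : x ≤ 1) :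
    Phi κ₁ κ₂ γ₁ γ₂ x ≤ 1 / (κ₁ * (1 - γ₁)) := by
  have hb : Phi κ₁ κ₂ γ₁ γ₂ x ≤ ∫ s in (0:ℝ)..x, κ₁⁻¹ * s ^ (-γ₁) := by
    apply intervalIntegral.integral_mono_on hx (Hinv_int hκ₁ hκ₂ hγ₁0 hγ₁1 hγ₂ hx)
      ((intervalIntegrable_rpow' (by linarith)).const_mul _)
    intro s hs
    rcases eq_or_lt_of_le hs.1 with h0 | h0
    · rw [← h0, Hzero hγ₁0 hγ₂, Real.zero_rpow (by linarith : -γ₁ ≠ 0)]; simp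
    · have h1 : 0 < κ₁ * s ^ γ₁ := by positivity
      calc (Hf κ₁ κ₂ γ₁ γ₂ s)⁻¹ ≤ (κ₁ * s ^ γ₁)⁻¹ := by
            apply inv_anti₀ h1
            have : 0 ≤ κ₂ * s ^ γ₂ := by positivity
            unfold Hf; linarith
        _ = κ₁⁻¹ * s ^ (-γ₁) := by rw [mul_inv, Real.rpow_neg h0.le]
  have hval : ∫ s in (0:ℝ)..x, κ₁⁻¹ * s ^ (-γ₁) = κ₁⁻¹ * (x ^ (1 - γ₁) / (1 - γ₁)) := by
    rw [intervalIntegral.integral_const_mul, integral_rpow (Or.inl (by linarith))]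
    rw [Real.zero_rpow (by linarith : -γ₁ + 1 ≠ 0)]
    ring_nf
  have hxp : x ^ (1 - γ₁) ≤ 1 := Real.rpow_le_one hx hx1 (by linarith)
  have h1γ : 0 < 1 - γ₁ := by linarith
  have hfin : κ₁⁻¹ * (x ^ (1 - γ₁) / (1 - γ₁)) ≤ 1 / (κ₁ * (1 - γ₁)) :=
    calc κ₁⁻¹ * (x ^ (1 - γ₁) / (1 - γ₁)) ≤ κ₁⁻¹ * (1 / (1 - γ₁)) := by gcongr
      _ = 1 / (κ₁ * (1 - γ₁)) := by field_simp
  linarith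
end Aux

section MainExtra
variable {κ₁ κ₂ γ₁ γ₂ : ℝ} (hκ₁ : 0 < κ₁) (hκ₂ : 0 < κ₂)
  (hγ₁0 : 0 < γ₁) (hγ₁1 : γ₁ < 1) (hγ₂ : 1 < γ₂)

set_option linter.unusedSectionVars false

include hκ₁ hκ₂ hγ₁0 hγ₁1 hγ₂ in
lemma Phi_lt {x : ℝ} (hx : 0 < x) :
    Phi κ₁ κ₂ γ₁ γ₂ x < 1 / (κ₁ * (1 - γ₁)) + 1 / (κ₂ * (γ₂ - 1)) := by
  have hγ₂1 : (0:ℝ) < γ₂ - 1 := by linarith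
  have hT₂ : 0 < 1 / (κ₂ * (γ₂ - 1)) := by positivity
  rcases le_or_gt x 1 with hx1 | hx1
  · have := Phi_le_T₁ hκ₁ hκ₂ hγ₁0 hγ₁1 hγ₂ hx.le hx1
    linarith
  · have hsub := Phi_sub hκ₁ hκ₂ hγ₁0 hγ₁1 hγ₂ (by norm_num : (0:ℝ) ≤ 1) hx1.le
    have h1 : Phi κ₁ κ₂ γ₁ γ₂ 1 ≤ 1 / (κ₁ * (1 - γ₁)) :=
      Phi_le_T₁ hκ₁ hκ₂ hγ₁0 hγ₁1 hγ₂ (by norm_num) le_rfl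
    have hintH : IntervalIntegrable (fun s => (Hf κ₁ κ₂ γ₁ γ₂ s)⁻¹) volume 1 x :=
      (Hinv_int hκ₁ hκ₂ hγ₁0 hγ₁1 hγ₂ (by linarith : (0:ℝ) ≤ x)).mono_set
        (by rw [uIcc_of_le hx1.le, uIcc_of_le (by linarith : (0:ℝ) ≤ x)]
            exact Icc_subset_Icc (by norm_num) le_rfl)
    have hintR : IntervalIntegrable (fun s => κ₂⁻¹ * s ^ (-γ₂)) volume 1 x := by
      apply ContinuousOn.intervalIntegrable
      intro s hs
      rw [uIcc_of_le hx1.le] at hs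
      have hs0 : s ≠ 0 := by intro h; rw [h] at hs; exact absurd hs.1 (by norm_num)
      exact (continuous_const.continuousAt.mul
        (Real.continuousAt_rpow_const s (-γ₂) (Or.inl hs0))).continuousWithinAt
    have h2 : ∫ s in (1:ℝ)..x, (Hf κ₁ κ₂ γ₁ γ₂ s)⁻¹ ≤ ∫ s in (1:ℝ)..x, κ₂⁻¹ * s ^ (-γ₂) := by
      apply intervalIntegral.integral_mono_on hx1.le hintH hintR
      intro s hs
      have hs0 : (0:ℝ) < s := lt_of_lt_of_le one_pos hs.1
      have hb : 0 < κ₂ * s ^ γ₂ := by positivity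
      calc (Hf κ₁ κ₂ γ₁ γ₂ s)⁻¹ ≤ (κ₂ * s ^ γ₂)⁻¹ := by
            apply inv_anti₀ hb
            have : 0 ≤ κ₁ * s ^ γ₁ := by positivity
            unfold Hf; linarith
        _ = κ₂⁻¹ * s ^ (-γ₂) := by rw [mul_inv, Real.rpow_neg hs0.le]
    have h3 : ∫ s in (1:ℝ)..x, κ₂⁻¹ * s ^ (-γ₂)
        = κ₂⁻¹ * ((x ^ (1 - γ₂) - 1) / (1 - γ₂)) := by
      rw [intervalIntegral.integral_const_mul, integral_rpow
        (Or.inr ⟨by intro h; rw [neg_eq_iff_eq_neg] at h; linarith,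
          by rw [uIcc_of_le hx1.le]; intro h; exact absurd h.1 (by norm_num)⟩)]
      rw [Real.one_rpow]
      ring_nf
    have h4 : κ₂⁻¹ * ((x ^ (1 - γ₂) - 1) / (1 - γ₂)) < 1 / (κ₂ * (γ₂ - 1)) := by
      have hxp : 0 < x ^ (1 - γ₂) := Real.rpow_pos_of_pos (by linarith) _
      have e1 : (x ^ (1 - γ₂) - 1) / (1 - γ₂) = (1 - x ^ (1 - γ₂)) / (γ₂ - 1) := by
        rw [div_eq_div_iff (by linarith : (1:ℝ) - γ₂ ≠ 0) (by linarith : γ₂ - 1 ≠ 0)]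
        ring
      rw [e1, inv_mul_eq_div, div_div, mul_comm (γ₂ - 1) κ₂]
      have hγ₂1b : (0:ℝ) < γ₂ - 1 := by linarith
      gcongr
      linarith
    linarith
end MainExtra
set_option maxHeartbeats 1000000 in
/-- Fixed-time convergence from the two-term differential inequality, for an
absolutely continuous nonnegative function `Λ` (encoded via a derivative `Λ'`
that is locally integrable and satisfies the fundamental theorem of calculus). -/
theorem stmt_14 (κ₁ κ₂ γ₁ γ₂ : ℝ)
    (hκ₁ : 0 < κ₁) (hκ₂ : 0 < κ₂)
    (hγ₁0 : 0 < γ₁) (hγ₁1 : γ₁ < 1) (hγ₂ : 1 < γ₂)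
    (Λ Λ' : ℝ → ℝ) (hnn : ∀ t, 0 ≤ t → 0 ≤ Λ t)
    (hint : ∀ a b : ℝ, IntervalIntegrable Λ' volume a b)
    (hftc : ∀ a b : ℝ, 0 ≤ a → a ≤ b → Λ b - Λ a = ∫ t in a..b, Λ' t)
    (hineq : ∀ᵐ t ∂volume, 0 ≤ t → 0 < Λ t →
      Λ' t ≤ -κ₁ * Λ t ^ γ₁ - κ₂ * Λ t ^ γ₂) :
    ∀ t, 1 / (κ₁ * (1 - γ₁)) + 1 / (κ₂ * (γ₂ - 1)) ≤ t → Λ t = 0 := by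
  have hγ₂0 : (0:ℝ) < γ₂ - 1 := by linarith
  have h1γ : (0:ℝ) < 1 - γ₁ := by linarith
  obtain ⟨T, hTdef⟩ : ∃ T : ℝ, T = 1 / (κ₁ * (1 - γ₁)) + 1 / (κ₂ * (γ₂ - 1)) := ⟨_, rfl⟩
  have hT0 : 0 < T := by
    have h1 : 0 < 1 / (κ₁ * (1 - γ₁)) := by positivity
    have h2 : 0 < 1 / (κ₂ * (γ₂ - 1)) := by positivity
    rw [hTdef]; linarith
  -- continuity of Λ on [0, ∞)
  have hΛcont : ContinuousOn Λ (Ici 0) := by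
    have hco : Continuous fun b => Λ 0 + ∫ t in (0:ℝ)..b, Λ' t :=
      continuous_const.add (intervalIntegral.continuous_primitive hint 0)
    apply hco.continuousOn.congr
    intro t ht
    have := hftc 0 t le_rfl ht
    simp only; linarith
  -- the key decrement estimate
  have key : ∀ a b c : ℝ, 0 ≤ a → a ≤ b → 0 ≤ c →
      (∀ t ∈ Icc a b, 0 < Λ t) → (∀ t ∈ Icc a b, c ≤ Λ t) →
      Λ b - Λ a ≤ -((b - a) * Hf κ₁ κ₂ γ₁ γ₂ c) := by
    intro a b c ha hab hc hposab hcle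
    have hIcc : Icc a b ⊆ Ici (0:ℝ) := fun t ht => ha.trans ht.1
    have hcΛ : ContinuousOn Λ (Icc a b) := hΛcont.mono hIcc
    have hint2 : IntervalIntegrable (fun t => -(Hf κ₁ κ₂ γ₁ γ₂ (Λ t))) volume a b := by
      apply ContinuousOn.intervalIntegrable
      rw [uIcc_of_le hab]
      exact ((Hcont hγ₁0 hγ₂).comp_continuousOn hcΛ).neg
    have h1 : ∫ t in a..b, Λ' t ≤ ∫ t in a..b, -(Hf κ₁ κ₂ γ₁ γ₂ (Λ t)) := by
      apply intervalIntegral.integral_mono_ae_restrict hab (hint a b) hint2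
      filter_upwards [ae_restrict_of_ae hineq, ae_restrict_mem measurableSet_Icc]
        with t h1 h2
      have := h1 (ha.trans h2.1) (hposab t h2)
      unfold Hf; linarith
    have h2 : ∫ t in a..b, -(Hf κ₁ κ₂ γ₁ γ₂ (Λ t)) ≤ ∫ _t in a..b, -(Hf κ₁ κ₂ γ₁ γ₂ c) := by
      apply intervalIntegral.integral_mono_on hab hint2 (by simp)
      intro t ht
      have := Hmono hκ₁ hκ₂ hγ₁0 hγ₂ hc (hcle t ht)
      linarith
    have h3 : ∫ _t in a..b, -(Hf κ₁ κ₂ γ₁ γ₂ c) = -((b - a) * Hf κ₁ κ₂ γ₁ γ₂ c) := by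
      rw [intervalIntegral.integral_const, smul_eq_mul]; ring
    rw [hftc a b ha hab]
    linarith
  -- once zero, always zero
  have factA : ∀ t₀ u : ℝ, 0 ≤ t₀ → t₀ ≤ u → Λ t₀ = 0 → Λ u = 0 := by
    intro t₀ u ht₀ htu h0
    by_contra hne
    have hu0 : 0 < Λ u := lt_of_le_of_ne (hnn u (ht₀.trans htu)) (Ne.symm hne)
    have htu' : t₀ < u := lt_of_le_of_ne htu (by rintro rfl; exact hne h0)
    set S : Set ℝ := Icc t₀ u ∩ Λ ⁻¹' {0} with hSdef
    have hSne : S.Nonempty := ⟨t₀, ⟨le_rfl, htu⟩, h0⟩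
    have hSbdd : BddAbove S := ⟨u, fun r hr => hr.1.2⟩
    have hSclosed : IsClosed S :=
      (hΛcont.mono (fun t ht => le_trans ht₀ ht.1)).preimage_isClosed_of_isClosed
        isClosed_Icc isClosed_singleton
    obtain ⟨s, ⟨⟨hst₀, hsu⟩, hΛs⟩, hsup⟩ :
        ∃ s, s ∈ S ∧ ∀ x ∈ S, x ≤ s :=
      ⟨sSup S, hSclosed.csSup_mem hSne hSbdd, fun x hx => le_csSup hSbdd hx⟩
    have hΛs0 : Λ s = 0 := hΛs
    have hsu' : s < u := lt_of_le_of_ne hsu (by rintro rfl; exact hne hΛs0)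
    have hstep : ∀ r ∈ Ioo s u, Λ u ≤ Λ r := by
      intro r hr
      have hr0 : 0 ≤ r := le_trans (le_trans ht₀ hst₀) hr.1.le
      have hposru : ∀ t ∈ Icc r u, 0 < Λ t := by
        intro t ht
        rcases (hnn t (hr0.trans ht.1)).lt_or_eq with h | h
        · exact h
        · exfalso
          have htS : t ∈ S :=
            ⟨⟨le_trans hst₀ (le_trans hr.1.le ht.1), ht.2⟩, h.symm⟩
          have : t ≤ s := hsup t htS
          have : r ≤ s := le_trans ht.1 this
          exact absurd hr.1 (not_lt.2 this)
      have hk := key r u 0 hr0 hr.2.le le_rfl hposru (fun t ht => (hposru t ht).le)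
      rw [Hzero hγ₁0 hγ₂] at hk
      simp only [mul_zero, neg_zero] at hk
      linarith
    have htend : Tendsto Λ (𝓝[>] s) (𝓝 (Λ s)) := by
      have h1 : ContinuousWithinAt Λ (Ici 0) s := hΛcont s (le_trans ht₀ hst₀)
      exact h1.tendsto.mono_left (nhdsWithin_mono s
        (fun x hx => le_trans (le_trans ht₀ hst₀) (le_of_lt hx)))
    have hev : ∀ᶠ r in 𝓝[>] s, Λ u ≤ Λ r := by
      filter_upwards [Ioo_mem_nhdsGT_of_mem ⟨le_rfl, hsu'⟩] with r hr using hstep r hr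
    have hfin := ge_of_tendsto htend hev
    rw [hΛs0] at hfin
    linarith
  -- main argument
  intro t ht
  rw [← hTdef] at ht
  by_cases hex : ∃ t₀ ∈ Icc (0:ℝ) T, Λ t₀ = 0
  · obtain ⟨t₀, ht₀, h0⟩ := hex
    exact factA t₀ t ht₀.1 (ht₀.2.trans ht) h0
  · exfalso
    push_neg at hex
    have hposT : ∀ r ∈ Icc (0:ℝ) T, 0 < Λ r := fun r hr =>
      lt_of_le_of_ne (hnn r hr.1) (Ne.symm (hex r hr))
    have hmonoΛ : ∀ a b : ℝ, 0 ≤ a → a ≤ b → b ≤ T → Λ b ≤ Λ a := by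
      intro a b ha hab hbT
      have hk := key a b 0 ha hab le_rfl
        (fun r hr => hposT r ⟨ha.trans hr.1, hr.2.trans hbT⟩)
        (fun r hr => (hposT r ⟨ha.trans hr.1, hr.2.trans hbT⟩).le)
      rw [Hzero hγ₁0 hγ₂] at hk
      simp only [mul_zero, neg_zero] at hk
      linarith
    have claim : ∀ ε : ℝ, 0 < ε → ε < 1 →
        (1 - ε) * T ≤ Phi κ₁ κ₂ γ₁ γ₂ (Λ 0) - Phi κ₁ κ₂ γ₁ γ₂ (Λ T) := by
      intro ε hε hε1
      by_contra hcon
      have hεlt : (0:ℝ) < 1 - ε := by linarith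
      set S : Set ℝ :=
        {r | r ∈ Icc (0:ℝ) T ∧ (1 - ε) * r ≤ Phi κ₁ κ₂ γ₁ γ₂ (Λ 0) - Phi κ₁ κ₂ γ₁ γ₂ (Λ r)}
        with hSdef
      have hPhiMono : ∀ r r' : ℝ, 0 ≤ r → r ≤ r' → r' ≤ T →
          Phi κ₁ κ₂ γ₁ γ₂ (Λ r') ≤ Phi κ₁ κ₂ γ₁ γ₂ (Λ r) := fun r r' hr hrr' hr'T =>
        Phi_mono hκ₁ hκ₂ hγ₁0 hγ₁1 hγ₂ (hnn r' (hr.trans hrr')) (hmonoΛ r r' hr hrr' hr'T)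
      have h0S : (0:ℝ) ∈ S := ⟨⟨le_rfl, hT0.le⟩, by simp⟩
      have hSne : S.Nonempty := ⟨0, h0S⟩
      have hSbdd : BddAbove S := ⟨T, fun r hr => hr.1.2⟩
      set s := sSup S with hsdef
      have hs0 : 0 ≤ s := le_csSup hSbdd h0S
      have hsT : s ≤ T := csSup_le hSne (fun r hr => hr.1.2)
      have hsS : (1 - ε) * s ≤ Phi κ₁ κ₂ γ₁ γ₂ (Λ 0) - Phi κ₁ κ₂ γ₁ γ₂ (Λ s) := by
        by_contra hno
        push_neg at hno
        set X : ℝ := (1 - ε) * s - (Phi κ₁ κ₂ γ₁ γ₂ (Λ 0) - Phi κ₁ κ₂ γ₁ γ₂ (Λ s)) with hXdef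
        have hX : 0 < X := by rw [hXdef]; linarith
        have hne' : (1:ℝ) - ε ≠ 0 := by linarith
        have hc : (1 - ε) * (X / (1 - ε)) = X := by field_simp
        have hδ : 0 < X / (1 - ε) := div_pos hX hεlt
        obtain ⟨r, hrS, hrgt⟩ := exists_lt_of_lt_csSup hSne
          (by linarith : s - X / (1 - ε) < sSup S)
        have hrs : r ≤ s := le_csSup hSbdd hrS
        have hDr := hPhiMono r s hrS.1.1 hrs hsT
        have h1 := hrS.2
        have h2 := mul_lt_mul_of_pos_left hrgt hεlt
        nlinarith
      have hsT' : s < T := by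
        rcases lt_or_eq_of_le hsT with h | h
        · exact h
        · exfalso; rw [h] at hsS; exact hcon hsS
      have hΛs : 0 < Λ s := hposT s ⟨hs0, hsT⟩
      have hHs : 0 < Hf κ₁ κ₂ γ₁ γ₂ (Λ s) := Hpos hκ₁ hκ₂ hΛs
      have htendH : Tendsto (fun r => Hf κ₁ κ₂ γ₁ γ₂ (Λ r)) (𝓝[>] s)
          (𝓝 (Hf κ₁ κ₂ γ₁ γ₂ (Λ s))) := by
        have h1 : ContinuousWithinAt Λ (Ici 0) s := hΛcont s hs0
        have h2 : Tendsto Λ (𝓝[>] s) (𝓝 (Λ s)) :=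
          h1.tendsto.mono_left (nhdsWithin_mono s (fun x hx => hs0.trans (le_of_lt hx)))
        exact ((Hcont hγ₁0 hγ₂).continuousAt).tendsto.comp h2
      have hev1 : ∀ᶠ r in 𝓝[>] s,
          (1 - ε) * Hf κ₁ κ₂ γ₁ γ₂ (Λ s) < Hf κ₁ κ₂ γ₁ γ₂ (Λ r) :=
        htendH.eventually (eventually_gt_nhds (by nlinarith))
      have hev2 : ∀ᶠ r in 𝓝[>] s, r ∈ Ioc s T :=
        Filter.eventually_of_mem (Ioc_mem_nhdsGT_of_mem ⟨le_rfl, hsT'⟩) (fun x hx => hx)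
      obtain ⟨t', hHt', ht'⟩ := (hev1.and hev2).exists
      have ht's : s < t' := ht'.1
      have ht'T : t' ≤ T := ht'.2
      have hΛt' : 0 < Λ t' := hposT t' ⟨hs0.trans ht's.le, ht'T⟩
      have hΛm : Λ t' ≤ Λ s := hmonoΛ s t' hs0 ht's.le ht'T
      have hdec : Λ t' - Λ s ≤ -((t' - s) * Hf κ₁ κ₂ γ₁ γ₂ (Λ t')) :=
        key s t' (Λ t') hs0 ht's.le hΛt'.le
          (fun r hr => hposT r ⟨hs0.trans hr.1, hr.2.trans ht'T⟩)
          (fun r hr => hmonoΛ r t' (hs0.trans hr.1) hr.2 ht'T)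
      have hlow : (Λ s - Λ t') * (Hf κ₁ κ₂ γ₁ γ₂ (Λ s))⁻¹ ≤
          Phi κ₁ κ₂ γ₁ γ₂ (Λ s) - Phi κ₁ κ₂ γ₁ γ₂ (Λ t') :=
        Phi_lower hκ₁ hκ₂ hγ₁0 hγ₁1 hγ₂ hΛt' hΛm
      have hchain : (1 - ε) * (t' - s) ≤
          Phi κ₁ κ₂ γ₁ γ₂ (Λ s) - Phi κ₁ κ₂ γ₁ γ₂ (Λ t') := by
        have h1 : (t' - s) * Hf κ₁ κ₂ γ₁ γ₂ (Λ t') ≤ Λ s - Λ t' := by linarith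
        have h2 := mul_le_mul_of_nonneg_right h1 (inv_nonneg.2 hHs.le)
        have hcan : Hf κ₁ κ₂ γ₁ γ₂ (Λ s) * (Hf κ₁ κ₂ γ₁ γ₂ (Λ s))⁻¹ = 1 :=
          mul_inv_cancel₀ hHs.ne'
        have hfrac : 1 - ε ≤ Hf κ₁ κ₂ γ₁ γ₂ (Λ t') * (Hf κ₁ κ₂ γ₁ γ₂ (Λ s))⁻¹ := by
          have h4 := mul_le_mul_of_nonneg_right hHt'.le (inv_nonneg.2 hHs.le)
          rw [mul_assoc, hcan, mul_one] at h4
          exact h4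
        have h5 : (t' - s) * (1 - ε) ≤
            (t' - s) * (Hf κ₁ κ₂ γ₁ γ₂ (Λ t') * (Hf κ₁ κ₂ γ₁ γ₂ (Λ s))⁻¹) :=
          mul_le_mul_of_nonneg_left hfrac (by linarith)
        have h6 : (t' - s) * (Hf κ₁ κ₂ γ₁ γ₂ (Λ t') * (Hf κ₁ κ₂ γ₁ γ₂ (Λ s))⁻¹) =
            (t' - s) * Hf κ₁ κ₂ γ₁ γ₂ (Λ t') * (Hf κ₁ κ₂ γ₁ γ₂ (Λ s))⁻¹ :=
          (mul_assoc _ _ _).symm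
        linarith
      have ht'S : t' ∈ S := by
        refine ⟨⟨hs0.trans ht's.le, ht'T⟩, ?_⟩
        linarith
      have : t' ≤ s := le_csSup hSbdd ht'S
      linarith
    -- use the claim
    have hΛ0 : 0 < Λ 0 := hposT 0 ⟨le_rfl, hT0.le⟩
    have hPhiT : 0 ≤ Phi κ₁ κ₂ γ₁ γ₂ (Λ T) := Phi_nonneg hκ₁ hκ₂ (hnn T hT0.le)
    have hPhi0 : Phi κ₁ κ₂ γ₁ γ₂ (Λ 0) < T := by
      rw [hTdef]; exact Phi_lt hκ₁ hκ₂ hγ₁0 hγ₁1 hγ₂ hΛ0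
    have hPhi0' : 0 ≤ Phi κ₁ κ₂ γ₁ γ₂ (Λ 0) := Phi_nonneg hκ₁ hκ₂ (hnn 0 le_rfl)
    have hε : 0 < (T - Phi κ₁ κ₂ γ₁ γ₂ (Λ 0)) / (2 * T) :=
      div_pos (by linarith) (by linarith)
    have hε1 : (T - Phi κ₁ κ₂ γ₁ γ₂ (Λ 0)) / (2 * T) < 1 := by
      rw [div_lt_one (by linarith)]; linarith
    have hcl := claim _ hε hε1
    have hTne : T ≠ 0 := hT0.ne'
    have he : (1 - (T - Phi κ₁ κ₂ γ₁ γ₂ (Λ 0)) / (2 * T)) * T =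
        T - (T - Phi κ₁ κ₂ γ₁ γ₂ (Λ 0)) / 2 := by
      field_simp
    rw [he] at hcl
    linarith
end

section
/- For the scalar ODE ẋ = −ρx − κ₁x^{γ₁} with ρ, κ₁ > 0, 0 < γ₁ < 1 (x ≥ 0, ẋ interpreted via odd powers), starting from x₀ with 0 ≤ x₀ ≤ 1, the time to reach 0 equals exactly (1/(ρ(1−γ₁))) ln(1 + (ρ/κ₁) x₀^{1−γ₁}). -/
/-!
Along a solution, `y = x ^ (1 - γ₁)` solves the linear equation `ẏ = -(1 - γ₁) (ρ y + κ₁)`, so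
`(x ^ (1 - γ₁) + κ₁ / ρ) * exp (ρ (1 - γ₁) t)` is constant as long as `x > 0`. This invariant is
bounded below by `κ₁ / ρ * exp (ρ (1 - γ₁) t)`, which forces `x` to hit `0`; at the first zero `τ`
the invariant equals `κ₁ / ρ * exp (ρ (1 - γ₁) τ)`, and equating it with its value
`x₀ ^ (1 - γ₁) + κ₁ / ρ` at time `0` gives `τ`.
-/

open Real Set Filter Topology

noncomputable def bernoulliInvariant (ρ κ γ : ℝ) (x : ℝ → ℝ) (t : ℝ) : ℝ :=
  (x t ^ (1 - γ) + κ / ρ) * exp (ρ * (1 - γ) * t)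

section BernoulliInvariant

variable {ρ κ γ : ℝ} {x : ℝ → ℝ}

theorem hasDerivAt_bernoulliInvariant {t : ℝ} (hρ : ρ ≠ 0)
    (hx : HasDerivAt x (-ρ * x t - κ * x t ^ γ) t) (hpos : 0 < x t) :
    HasDerivAt (bernoulliInvariant ρ κ γ x) 0 t := by
  have hpow := (hx.rpow_const (p := 1 - γ) (Or.inl hpos.ne')).add_const (κ / ρ)
  have hexp : HasDerivAt (fun s => exp (ρ * (1 - γ) * s))
      (exp (ρ * (1 - γ) * t) * (ρ * (1 - γ))) t := by
    simpa using ((hasDerivAt_id t).const_mul (ρ * (1 - γ))).exp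
  have hx_mul : x t ^ (1 - γ - 1) * x t = x t ^ (1 - γ) := by
    rw [← rpow_add_one hpos.ne']; ring_nf
  have hxγ_mul : x t ^ (1 - γ - 1) * x t ^ γ = 1 := by
    rw [← rpow_add hpos]; ring_nf; exact rpow_zero _
  refine (hpow.mul hexp).congr_deriv ?_
  field_simp
  linear_combination (-((1 - γ) * exp (ρ * (1 - γ) * t) * ρ)) * hx_mul +
    (-((1 - γ) * exp (ρ * (1 - γ) * t) * κ)) * hxγ_mul

theorem continuousAt_bernoulliInvariant {t : ℝ} (hγ : γ ≤ 1) (hx : ContinuousAt x t) :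
    ContinuousAt (bernoulliInvariant ρ κ γ x) t :=
  ((hx.rpow_const (Or.inr (by linarith))).add continuousAt_const).mul (by fun_prop)

theorem bernoulliInvariant_eq_of_pos {a b : ℝ} (hρ : ρ ≠ 0) (hγ : γ ≤ 1) (hab : a ≤ b)
    (hode : ∀ t ∈ Icc a b, HasDerivAt x (-ρ * x t - κ * x t ^ γ) t)
    (hpos : ∀ t ∈ Ico a b, 0 < x t) :
    bernoulliInvariant ρ κ γ x b = bernoulliInvariant ρ κ γ x a := by
  refine constant_of_has_deriv_right_zero (fun t ht => ?_) (fun t ht => ?_) b ⟨hab, le_rfl⟩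
  · exact (continuousAt_bernoulliInvariant hγ (hode t ht).continuousAt).continuousWithinAt
  · exact (hasDerivAt_bernoulliInvariant hρ (hode t (Ico_subset_Icc_self ht)) (hpos t ht))
      |>.hasDerivWithinAt

theorem bernoulliInvariant_of_eq_zero {t : ℝ} (hγ : γ < 1) (hx : x t = 0) :
    bernoulliInvariant ρ κ γ x t = κ / ρ * exp (ρ * (1 - γ) * t) := by
  rw [bernoulliInvariant, hx, zero_rpow (by linarith), zero_add]

theorem le_bernoulliInvariant {t : ℝ} (hx : 0 ≤ x t) :
    κ / ρ * exp (ρ * (1 - γ) * t) ≤ bernoulliInvariant ρ κ γ x t := by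
  unfold bernoulliInvariant
  gcongr
  exact le_add_of_nonneg_left (rpow_nonneg hx _)

theorem exists_zero_of_bernoulli (hρ : 0 < ρ) (hκ : 0 < κ) (hγ : γ < 1)
    (hnn : ∀ t, 0 ≤ t → 0 ≤ x t)
    (hode : ∀ t, 0 ≤ t → HasDerivAt x (-ρ * x t - κ * x t ^ γ) t) :
    ∃ t, 0 ≤ t ∧ x t = 0 := by
  by_contra! hne
  have hgrow : Tendsto (fun t => κ / ρ * exp (ρ * (1 - γ) * t)) atTop atTop :=
    (tendsto_exp_atTop.comp (tendsto_id.const_mul_atTop (by nlinarith))).const_mul_atTop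
      (by positivity)
  obtain ⟨t, ht, hbig⟩ := ((eventually_ge_atTop 0).and
    (hgrow.eventually_gt_atTop (bernoulliInvariant ρ κ γ x 0))).exists
  have hconst := bernoulliInvariant_eq_of_pos hρ.ne' hγ.le ht (fun s hs => hode s hs.1)
    (fun s hs => (hnn s hs.1).lt_of_ne' (hne s hs.1))
  exact (le_bernoulliInvariant (hnn t ht)).not_gt (hconst ▸ hbig)

end BernoulliInvariant

theorem csInf_zeroSet_mem {x : ℝ → ℝ} {a : ℝ} (hx : ContinuousOn x (Ici a))
    (hne : ∃ t, a ≤ t ∧ x t = 0) :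
    sInf {t | a ≤ t ∧ x t = 0} ∈ {t | a ≤ t ∧ x t = 0} :=
  (hx.preimage_isClosed_of_isClosed isClosed_Ici isClosed_singleton).csInf_mem hne
    ⟨a, fun _ ht => ht.1⟩

theorem stmt_17_general (ρ κ₁ γ₁ : ℝ)
    (hρ : 0 < ρ) (hκ₁ : 0 < κ₁) (hγ₁1 : γ₁ < 1)
    (x : ℝ → ℝ) (x₀ : ℝ) (hx0 : x 0 = x₀)
    (hnn : ∀ t, 0 ≤ t → 0 ≤ x t)
    (hode : ∀ t, 0 ≤ t → HasDerivAt x (-ρ * x t - κ₁ * x t ^ γ₁) t) :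
    sInf {t : ℝ | 0 ≤ t ∧ x t = 0} =
      1 / (ρ * (1 - γ₁)) * Real.log (1 + ρ / κ₁ * x₀ ^ (1 - γ₁)) := by
  set τ := sInf {t : ℝ | 0 ≤ t ∧ x t = 0}
  have hbdd : BddBelow {t : ℝ | 0 ≤ t ∧ x t = 0} := ⟨0, fun _ ht => ht.1⟩
  obtain ⟨hτ0, hxτ⟩ : 0 ≤ τ ∧ x τ = 0 :=
    csInf_zeroSet_mem (fun t ht => (hode t ht).continuousAt.continuousWithinAt)
      (exists_zero_of_bernoulli hρ hκ₁ hγ₁1 hnn hode)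
  have hpos : ∀ t ∈ Ico 0 τ, 0 < x t := fun t ht =>
    (hnn t ht.1).lt_of_ne' fun h => notMem_of_lt_csInf ht.2 hbdd ⟨ht.1, h⟩
  have hinv := bernoulliInvariant_eq_of_pos hρ.ne' hγ₁1.le hτ0 (fun t ht => hode t ht.1) hpos
  rw [bernoulliInvariant_of_eq_zero hγ₁1 hxτ, bernoulliInvariant, hx0, mul_zero, exp_zero,
    mul_one] at hinv
  have hexp : exp (ρ * (1 - γ₁) * τ) = 1 + ρ / κ₁ * x₀ ^ (1 - γ₁) := by
    field_simp at hinv ⊢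
    linarith
  have hc : ρ * (1 - γ₁) ≠ 0 := mul_ne_zero hρ.ne' (by linarith)
  rw [← hexp, log_exp, one_div, inv_mul_cancel_left₀ hc]

theorem stmt_17 (ρ κ₁ γ₁ : ℝ)
    (hρ : 0 < ρ) (hκ₁ : 0 < κ₁) (hγ₁0 : 0 < γ₁) (hγ₁1 : γ₁ < 1)
    (x : ℝ → ℝ) (x₀ : ℝ) (hx0 : x 0 = x₀) (hx₀0 : 0 ≤ x₀) (hx₀1 : x₀ ≤ 1)
    (hnn : ∀ t, 0 ≤ t → 0 ≤ x t)
    (hode : ∀ t, 0 ≤ t → HasDerivAt x (-ρ * x t - κ₁ * x t ^ γ₁) t) :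
    sInf {t : ℝ | 0 ≤ t ∧ x t = 0} =
      1 / (ρ * (1 - γ₁)) * Real.log (1 + ρ / κ₁ * x₀ ^ (1 - γ₁)) :=
  stmt_17_general ρ κ₁ γ₁ hρ hκ₁ hγ₁1 x x₀ hx0 hnn hode
end
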